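/- arXiv:1101.3199 — 7 statements merged into one kernel-verified Lean document; each statement's English description precedes it below -/
import Mathlib

section
/- Let f : Y → X be a quasi-compact flat monomorphism of schemes which is surjective on underlying topological spaces. Then f is an isomorphism. -/
open AlgebraicGeometry CategoryTheory

/-- A morphism of schemes is flat if all the induced maps on stalks are flat ring
homomorphisms. -/
def SchemeHomFlat {X Y : AlgebraicGeometry.Scheme} (f : X ⟶ Y) : Prop :=
  ∀ x : X, RingHom.Flat (f.stalkMap x).hom

/-- A quasi-compact flat monomorphism of schemes which is surjective on
underlying topological spaces is an isomorphism. -/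
theorem isIso_of_quasiCompact_flat_mono_surjective
    {Y X : AlgebraicGeometry.Scheme} (f : Y ⟶ X) [QuasiCompact f]
    (hflat : SchemeHomFlat f) (hmono : Mono f)
    (hsurj : Function.Surjective f.base) : IsIso f :=
  have : Flat f := Flat.of_stalkMap f hflat
  have : Surjective f := ⟨hsurj⟩
  Flat.isIso_of_surjective_of_mono f
end

section
/- Let A be a local commutative ring and let (I_α)_{α ∈ S} be a nonempty family of ideals of A such that the ideal Σ_α I_α (the supremum of the family) is principal. Then the family has a greatest element: there exists α₀ ∈ S such that I_α ⊆ I_{α₀} for all α ∈ S; in particular I_{α₀} = Σ_α I_α. -/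
/-- Let `A` be a local commutative ring and `(I α)` a nonempty family of
ideals of `A` whose supremum `⨆ α, I α` is a principal ideal.  Then the family has a greatest
element `I α₀`; in particular `I α₀ = ⨆ α, I α`. -/
theorem exists_greatest_of_iSup_isPrincipal
    {A : Type*} [CommRing A] [IsLocalRing A] {S : Type*} [Nonempty S]
    (I : S → Ideal A) (h : (⨆ α, I α).IsPrincipal) :
    ∃ α₀ : S, (∀ α : S, I α ≤ I α₀) ∧ I α₀ = ⨆ α, I α := by
  classical
  obtain ⟨x, hx⟩ := h
  have hmem : x ∈ ⨆ α, I α := by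
    rw [hx]; exact Submodule.mem_span_singleton_self x
  rw [Submodule.mem_iSup_iff_exists_finsupp] at hmem
  obtain ⟨f, hf, hsum⟩ := hmem
  -- each f α lies in the span of x
  have hfa : ∀ α, ∃ c : A, f α = c * x := by
    intro α
    have : f α ∈ ⨆ α, I α := le_iSup I α (hf α)
    rw [hx, Submodule.mem_span_singleton] at this
    obtain ⟨c, hc⟩ := this
    exact ⟨c, by rw [← hc, smul_eq_mul]⟩
  choose c hc using hfa
  by_cases hu : ∃ α, IsUnit (c α)
  · obtain ⟨α₀, hα₀⟩ := hu
    have hxmem : x ∈ I α₀ := by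
      obtain ⟨u, hu'⟩ := hα₀
      have : (↑u⁻¹ : A) * f α₀ ∈ I α₀ := Ideal.mul_mem_left _ _ (hf α₀)
      rwa [hc α₀, ← hu', ← mul_assoc, Units.inv_mul, one_mul] at this
    have hle : (⨆ α, I α) ≤ I α₀ := by
      rw [hx, Submodule.span_le]
      simpa using hxmem
    exact ⟨α₀, fun α => le_trans (le_iSup I α) hle,
      le_antisymm (le_iSup I α₀) hle⟩
  · push_neg at hu
    -- all coefficients are nonunits, so their sum lies in the maximal ideal
    have hsumc : (f.sum fun α _ => c α) ∈ IsLocalRing.maximalIdeal A := by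
      refine Ideal.sum_mem _ fun α _ => ?_
      exact hu α
    have hxeq : (f.sum fun α _ => c α) * x = x := by
      have key : (f.sum fun _ xi => xi) = (f.sum fun α _ => c α) * x := by
        rw [Finsupp.sum, Finsupp.sum, Finset.sum_mul]
        exact Finset.sum_congr rfl fun α _ => hc α
      rw [← key, hsum]
    have hunit : IsUnit (1 - f.sum fun α _ => c α) :=
      IsLocalRing.isUnit_one_sub_self_of_mem_nonunits _ hsumc
    have hx0 : x = 0 := by
      have h1 : (1 - f.sum fun α _ => c α) * x = 0 := by
        rw [sub_mul, one_mul, hxeq, sub_self]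
      obtain ⟨u, hu'⟩ := hunit
      calc x = ↑u⁻¹ * (↑u * x) := by rw [← mul_assoc, Units.inv_mul, one_mul]
        _ = ↑u⁻¹ * 0 := by rw [hu', h1]
        _ = 0 := mul_zero _
    have hbot : (⨆ α, I α) = ⊥ := by
      rw [hx, hx0]
      exact Submodule.span_zero_singleton A
    obtain ⟨α₀⟩ := ‹Nonempty S›
    have hall : ∀ α, I α = ⊥ := fun α =>
      le_antisymm (hbot ▸ le_iSup I α) bot_le
    exact ⟨α₀, fun α => by rw [hall α]; exact bot_le, by rw [hall α₀, hbot]⟩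
end

section
/- Let R be a commutative ring, let R' be a flat commutative R-algebra, let B, C, K be commutative R-algebras, and let f : B → K and g : C → K be R-algebra homomorphisms with g surjective. Let A = B ×_K C = {(b,c) ∈ B × C : f(b) = g(c)} be the fiber product R-algebra. Then the natural R'-algebra homomorphism A ⊗_R R' → (B ⊗_R R') ×_{K ⊗_R R'} (C ⊗_R R') is bijective, where the target is the fiber product of B ⊗_R R' and C ⊗_R R' over K ⊗_R R' along the base-changed maps f ⊗ id and g ⊗ id. -/
/-!
`B ×_K C` is the kernel of `(b, c) ↦ f b - g c`, so `0 → B ×_K C → B × C → K` is exact.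
Flat base change keeps it exact and commutes with finite products, which identifies
`(B ×_K C) ⊗ R'` with the fiber product of the base changes.
-/

open TensorProduct

universe u

theorem AlgHom.exact_equalizer_val_sub {R S T : Type*} [CommRing R] [Ring S] [Ring T]
    [Algebra R S] [Algebra R T] (φ ψ : S →ₐ[R] T) :
    Function.Exact (AlgHom.equalizer φ ψ).val.toLinearMap (φ.toLinearMap - ψ.toLinearMap) :=
  fun x => sub_eq_zero.trans ⟨fun hx => ⟨⟨x, hx⟩, rfl⟩, by rintro ⟨⟨y, hy⟩, rfl⟩; exact hy⟩

section

variable {R M N P : Type*} (Q : Type*) [CommRing R] [AddCommGroup M] [AddCommGroup N]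
  [AddCommGroup P] [AddCommGroup Q] [Module R M] [Module R N] [Module R P] [Module R Q]

theorem LinearMap.rTensor_comp_fst_sub_comp_snd (u : M →ₗ[R] P) (v : N →ₗ[R] P) :
    (u ∘ₗ LinearMap.fst R M N - v ∘ₗ LinearMap.snd R M N).rTensor Q =
      (u.rTensor Q ∘ₗ LinearMap.fst R (M ⊗[R] Q) (N ⊗[R] Q) -
        v.rTensor Q ∘ₗ LinearMap.snd R (M ⊗[R] Q) (N ⊗[R] Q)) ∘ₗ
        (prodLeft R R M N Q).toLinearMap :=
  TensorProduct.ext' fun ⟨_, _⟩ _ => by simp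

theorem Module.Flat.exact_prodLeft_comp_rTensor [Module.Flat R Q] {L : Type*} [AddCommGroup L]
    [Module R L] {ι : L →ₗ[R] M × N} {u : M →ₗ[R] P} {v : N →ₗ[R] P}
    (h : Function.Exact ι (u ∘ₗ LinearMap.fst R M N - v ∘ₗ LinearMap.snd R M N)) :
    Function.Exact ((prodLeft R R M N Q).toLinearMap ∘ₗ ι.rTensor Q)
      (u.rTensor Q ∘ₗ LinearMap.fst R (M ⊗[R] Q) (N ⊗[R] Q) -
        v.rTensor Q ∘ₗ LinearMap.snd R (M ⊗[R] Q) (N ⊗[R] Q)) := by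
  have := (LinearEquiv.conj_exact_iff_exact _ _ (prodLeft R R M N Q)).mpr
    (Module.Flat.rTensor_exact Q h)
  rw [LinearMap.rTensor_comp_fst_sub_comp_snd] at this
  simpa [LinearMap.comp_assoc] using this

end

theorem fiberProduct_tensor_flat_baseChange_general
    (R R' B C K : Type u) [CommRing R] [CommRing R'] [CommRing B] [CommRing C] [CommRing K]
    [Algebra R R'] [Module.Flat R R'] [Algebra R B] [Algebra R C] [Algebra R K]
    (f : B →ₐ[R] K) (g : C →ₐ[R] K) :
    let A : Subalgebra R (B × C) :=
      AlgHom.equalizer (f.comp (AlgHom.fst R B C)) (g.comp (AlgHom.snd R B C))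
    let ψ : A ⊗[R] R' →ₐ[R] (B ⊗[R] R') × (C ⊗[R] R') :=
      AlgHom.prod
        (Algebra.TensorProduct.map ((AlgHom.fst R B C).comp A.val) (AlgHom.id R R'))
        (Algebra.TensorProduct.map ((AlgHom.snd R B C).comp A.val) (AlgHom.id R R'))
    Function.Injective ψ ∧
      Set.range ψ = {x : (B ⊗[R] R') × (C ⊗[R] R') |
        Algebra.TensorProduct.map f (AlgHom.id R R') x.1 =
          Algebra.TensorProduct.map g (AlgHom.id R R') x.2} := by
  intro A ψ
  have hψ : ψ.toLinearMap =
      (prodLeft R R B C R').toLinearMap ∘ₗ A.val.toLinearMap.rTensor R' := by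
    ext <;> rfl
  have hexact := Module.Flat.exact_prodLeft_comp_rTensor R'
    (u := f.toLinearMap) (v := g.toLinearMap)
    (AlgHom.exact_equalizer_val_sub (f.comp (AlgHom.fst R B C)) (g.comp (AlgHom.snd R B C)))
  rw [← hψ] at hexact
  refine ⟨?_, ?_⟩
  · rw [← ψ.coe_toLinearMap, hψ]
    exact (prodLeft R R B C R').injective.comp
      (Module.Flat.rTensor_preserves_injective_linearMap _ Subtype.val_injective)
  · ext x
    exact (hexact x).symm.trans sub_eq_zero

/-- Let `R' ` be a flat `R`-algebra, let `f : B → K` and `g : C → K` be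
`R`-algebra homomorphisms with `g` surjective, and let `A = B ×_K C` be the fiber product
`R`-algebra.  Then the natural map `A ⊗[R] R' → (B ⊗[R] R') ×_{K ⊗[R] R'} (C ⊗[R] R')` is
bijective: it is injective and its range is exactly the fiber product of `B ⊗[R] R'` and
`C ⊗[R] R'` over `K ⊗[R] R'` along the base-changed maps. -/
theorem fiberProduct_tensor_flat_baseChange
    (R R' B C K : Type u) [CommRing R] [CommRing R'] [CommRing B] [CommRing C] [CommRing K]
    [Algebra R R'] [Module.Flat R R'] [Algebra R B] [Algebra R C] [Algebra R K]
    (f : B →ₐ[R] K) (g : C →ₐ[R] K) (hg : Function.Surjective g) :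
    let A : Subalgebra R (B × C) :=
      AlgHom.equalizer (f.comp (AlgHom.fst R B C)) (g.comp (AlgHom.snd R B C))
    let ψ : A ⊗[R] R' →ₐ[R] (B ⊗[R] R') × (C ⊗[R] R') :=
      AlgHom.prod
        (Algebra.TensorProduct.map ((AlgHom.fst R B C).comp A.val) (AlgHom.id R R'))
        (Algebra.TensorProduct.map ((AlgHom.snd R B C).comp A.val) (AlgHom.id R R'))
    Function.Injective ψ ∧
      Set.range ψ = {x : (B ⊗[R] R') × (C ⊗[R] R') |
        Algebra.TensorProduct.map f (AlgHom.id R R') x.1 =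
          Algebra.TensorProduct.map g (AlgHom.id R R') x.2} :=
  fiberProduct_tensor_flat_baseChange_general R R' B C K f g
end

section
/- Let X be an integral scheme such that for every point x the stalk O_{X,x} is a valuation ring, and let f : X → S be a morphism of schemes. Then f is separated if and only if for every pair of points x, y ∈ X such that f(x) = f(y) and the images of O_{X,x} and O_{X,y} under the canonical injections into the function field k(X) coincide as subrings of k(X), one has x = y. In particular (taking S the spectrum of the integers), X itself is separated if and only if no two distinct points of X have the same local ring inside k(X). -/
/-!
If `f` is separated and `𝒪_{X,x} = 𝒪_{X,y}` inside `k(X)`, the canonical map `Spec 𝒪_{X,x} ⟶ X`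
and the map through `Spec 𝒪_{X,y}` agree on `Spec k(X)` and over `S`, so the uniqueness part of
the valuative criterion gives `x = y`.

Conversely, the image of the diagonal is the closure of the image of the generic point. The
local ring of a point `w` of `X ×_S X` in that closure dominates, inside `k(X)`, both valuation
rings `𝒪_{X, pr₁ w}` and `𝒪_{X, pr₂ w}`; valuation rings are maximal for domination, so all three
coincide. Hence `pr₁ w = pr₂ w =: x`, and `𝒪_{X×X, w} ⟶ 𝒪_{X,x}` yields a morphism
`Spec 𝒪_{X,x} ⟶ X ×_S X` hitting `w` and factoring through the diagonal.
-/

open AlgebraicGeometry CategoryTheory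

/-- A commutative ring is a valuation ring if it is a domain and for all `a`, `b` there
exists `c` with `a * c = b` or `b * c = a`. -/
def IsValuationRing (S : Type*) [CommRing S] : Prop :=
  IsDomain S ∧ ∀ a b : S, ∃ c : S, a * c = b ∨ b * c = a

open CategoryTheory.Limits

theorem IsValuationRing.valuationRing {S : Type*} [CommRing S] [IsDomain S]
    (h : IsValuationRing S) : ValuationRing S :=
  { cond' := h.2 }

theorem RingHom.exists_ringEquiv_comp_eq_of_range_eq {R S T : Type*} [Ring R] [Ring S] [Ring T]
    {f : R →+* T} {g : S →+* T} (hf : Function.Injective f) (hg : Function.Injective g)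
    (h : Set.range f = Set.range g) : ∃ e : R ≃+* S, g.comp e = f := by
  have hfg : f.range = g.range := SetLike.ext' (by simpa only [RingHom.coe_range] using h)
  let ef := RingEquiv.ofBijective f.rangeRestrict
    ⟨fun a b hab => hf (congrArg Subtype.val hab), f.rangeRestrict_surjective⟩
  let eg := RingEquiv.ofBijective g.rangeRestrict
    ⟨fun a b hab => hg (congrArg Subtype.val hab), g.rangeRestrict_surjective⟩
  refine ⟨ef.trans ((RingEquiv.subringCongr hfg).trans eg.symm), RingHom.ext fun r => ?_⟩
  exact congrArg Subtype.val (eg.apply_symm_apply _)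

theorem exists_surjective_retraction_of_valuationRing {R S K : Type*} [CommRing R] [IsDomain R]
    [ValuationRing R] [CommRing S] [IsLocalRing S] [Field K] [Algebra R K] [IsFractionRing R K]
    (f : R →+* S) [IsLocalHom f] (g : S →+* K) (h : g.comp f = algebraMap R K) :
    ∃ φ : S →+* R, Function.Surjective φ ∧ (algebraMap R K).comp φ = g := by
  let e := RingEquiv.ofBijective _ (bijective_rangeRestrict_comp_of_valuationRing f g h)
  refine ⟨e.symm.toRingHom.comp g.rangeRestrict,
    e.symm.surjective.comp g.rangeRestrict_surjective, RingHom.ext fun s => ?_⟩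
  rw [← h]
  exact congrArg Subtype.val (e.apply_symm_apply (g.rangeRestrict s))

theorem IsGenericPoint.isClosed_range {X Y : Type*} [TopologicalSpace X] [TopologicalSpace Y]
    {g : X → Y} (hg : Continuous g) {η : X} (hη : IsGenericPoint η ⊤)
    (H : ∀ y, g η ⤳ y → y ∈ Set.range g) : IsClosed (Set.range g) := by
  have hrange : Set.range g ⊆ closure {g η} := by
    rintro _ ⟨x, rfl⟩
    exact specializes_iff_mem_closure.mp ((hη.specializes (Set.mem_univ x)).map hg)
  exact isClosed_of_closure_subset fun y hy =>
    H y (specializes_iff_mem_closure.mpr (closure_minimal hrange isClosed_closure hy))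

namespace AlgebraicGeometry

namespace Scheme

theorem fromSpecStalk_SpecMap_closedPoint {X : Scheme} {R : CommRingCat} [IsLocalRing R] {x : X}
    (φ : X.presheaf.stalk x ⟶ R) [IsLocalHom φ.hom] :
    (Spec.map φ ≫ X.fromSpecStalk x) (IsLocalRing.closedPoint R) = x :=
  (congrArg (X.fromSpecStalk x) Spec_closedPoint).trans fromSpecStalk_closedPoint

theorem Hom.SpecMap_fromSpecStalk_comp_eq_fromSpecStalk {W X : Scheme} (p : W ⟶ X) {w : W} {x : X}
    (h : x ⤳ p w) {φ : W.presheaf.stalk w ⟶ X.presheaf.stalk x}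
    (hφ : p.stalkMap w ≫ φ = X.presheaf.stalkSpecializes h) :
    (Spec.map φ ≫ W.fromSpecStalk w) ≫ p = X.fromSpecStalk x := by
  rw [Category.assoc, ← SpecMap_stalkMap_fromSpecStalk, ← Spec.map_comp_assoc, hφ,
    SpecMap_stalkSpecializes_fromSpecStalk]

theorem Hom.stalkMap_stalkSpecializes_stalkMap_of_comp_eq_id {W X : Scheme} {s : X ⟶ W}
    {p : W ⟶ X} (hp : s ≫ p = 𝟙 X) {x : X} {w : W} (h : s x ⤳ w) (hx : x ⤳ p w) :
    p.stalkMap w ≫ W.presheaf.stalkSpecializes h ≫ s.stalkMap x =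
      X.presheaf.stalkSpecializes hx := by
  rw [← Category.assoc, ← p.stalkSpecializes_stalkMap, Category.assoc, ← Hom.stalkMap_comp,
    Hom.stalkMap_congr_hom _ _ hp, Hom.stalkMap_id]
  -- the source of the remaining `stalkCongr` is `(𝟙 X) x`, which is `x` only up to defeq
  erw [Category.comp_id, TopCat.Presheaf.stalkCongr_hom, TopCat.Presheaf.stalkSpecializes_comp]
  rfl

variable {X : Scheme}

noncomputable abbrev stalkToFunctionField (X : Scheme) [IrreducibleSpace X] (x : X) :
    X.presheaf.stalk x ⟶ X.functionField :=
  X.presheaf.stalkSpecializes ((genericPoint_spec X).specializes trivial)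

theorem ofHom_algebraMap_stalk [IrreducibleSpace X] (x : X) :
    CommRingCat.ofHom (algebraMap (X.presheaf.stalk x) X.functionField) =
      X.stalkToFunctionField x :=
  rfl

theorem stalkSpecializes_stalkToFunctionField [IrreducibleSpace X] {x y : X} (h : x ⤳ y) :
    X.presheaf.stalkSpecializes h ≫ X.stalkToFunctionField x = X.stalkToFunctionField y :=
  TopCat.Presheaf.stalkSpecializes_comp _ _ _

instance [IsIntegral X] (x : X) : Mono (X.stalkToFunctionField x) :=
  ConcreteCategory.mono_of_injective _
    (IsFractionRing.injective (X.presheaf.stalk x) X.functionField)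

theorem eq_stalkSpecializes_of_comp_stalkToFunctionField [IsIntegral X] {x y : X} (h : x ⤳ y)
    {ψ : X.presheaf.stalk y ⟶ X.presheaf.stalk x}
    (hψ : ψ ≫ X.stalkToFunctionField x = X.stalkToFunctionField y) :
    ψ = X.presheaf.stalkSpecializes h := by
  rw [← cancel_mono (X.stalkToFunctionField x), hψ, stalkSpecializes_stalkToFunctionField]

theorem Hom.stalkMap_comp_eq_of_comp_stalkToFunctionField [IsIntegral X] {S : Scheme} (g : X ⟶ S)
    {x y : X} (h : g x ⤳ g y) {ψ : X.presheaf.stalk y ⟶ X.presheaf.stalk x}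
    (hψ : ψ ≫ X.stalkToFunctionField x = X.stalkToFunctionField y) :
    g.stalkMap y ≫ ψ = S.presheaf.stalkSpecializes h ≫ g.stalkMap x := by
  rw [← cancel_mono (X.stalkToFunctionField x), Category.assoc, hψ, Category.assoc,
    ← Hom.stalkSpecializes_stalkMap, ← Hom.stalkSpecializes_stalkMap,
    TopCat.Presheaf.stalkSpecializes_comp_assoc]

theorem Hom.SpecMap_fromSpecStalk_comp_eq_of_comp_stalkToFunctionField [IsIntegral X] {S : Scheme}
    (g : X ⟶ S) {x y : X} (hxy : g x = g y) {ψ : X.presheaf.stalk y ⟶ X.presheaf.stalk x}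
    (hψ : ψ ≫ X.stalkToFunctionField x = X.stalkToFunctionField y) :
    (Spec.map ψ ≫ X.fromSpecStalk y) ≫ g = X.fromSpecStalk x ≫ g := by
  rw [Category.assoc, ← SpecMap_stalkMap_fromSpecStalk, ← Spec.map_comp_assoc,
    g.stalkMap_comp_eq_of_comp_stalkToFunctionField (specializes_of_eq hxy) hψ,
    Spec.map_comp_assoc, SpecMap_stalkSpecializes_fromSpecStalk, SpecMap_stalkMap_fromSpecStalk]

theorem exists_surjective_stalk_retraction_of_comp_eq_id [IsIntegral X] {W : Scheme} {s : X ⟶ W}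
    {p : W ⟶ X} (hp : s ≫ p = 𝟙 X) {w : W} (h : s (genericPoint X) ⤳ w)
    [ValuationRing (X.presheaf.stalk (p w))] :
    ∃ φ : W.presheaf.stalk w ⟶ X.presheaf.stalk (p w), Function.Surjective φ ∧
      φ ≫ X.stalkToFunctionField (p w) =
        W.presheaf.stalkSpecializes h ≫ s.stalkMap (genericPoint X) := by
  obtain ⟨φ, hφs, hφ⟩ := exists_surjective_retraction_of_valuationRing (p.stalkMap w).hom
    (W.presheaf.stalkSpecializes h ≫ s.stalkMap (genericPoint X)).hom
    (congrArg CommRingCat.Hom.hom (Hom.stalkMap_stalkSpecializes_stalkMap_of_comp_eq_id hp h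
      ((genericPoint_spec X).specializes trivial)))
  exact ⟨CommRingCat.ofHom φ, hφs, CommRingCat.hom_ext hφ⟩

end Scheme

open Scheme

theorem eq_of_isSeparated_of_comp_stalkToFunctionField {X S : Scheme} [IsIntegral X] (f : X ⟶ S)
    [IsSeparated f] {x y : X} [ValuationRing (X.presheaf.stalk x)] (hxy : f x = f y)
    (ψ : X.presheaf.stalk y ⟶ X.presheaf.stalk x) [IsLocalHom ψ.hom]
    (hψ : ψ ≫ X.stalkToFunctionField x = X.stalkToFunctionField y) : x = y := by
  have hx : genericPoint X ⤳ x := (genericPoint_spec X).specializes (Set.mem_univ x)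
  let sq : ValuativeCommSq f :=
    { R := X.presheaf.stalk x
      K := X.functionField
      domain := inferInstance
      i₁ := X.fromSpecStalk (genericPoint X)
      i₂ := X.fromSpecStalk x ≫ f
      commSq := ⟨by rw [← SpecMap_stalkSpecializes_fromSpecStalk hx, Category.assoc,
        ofHom_algebraMap_stalk]⟩ }
  let l₁ : sq.commSq.LiftStruct :=
    ⟨X.fromSpecStalk x, by
      rw [ofHom_algebraMap_stalk]
      exact SpecMap_stalkSpecializes_fromSpecStalk hx, rfl⟩
  let l₂ : sq.commSq.LiftStruct :=
    ⟨Spec.map ψ ≫ X.fromSpecStalk y, by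
      rw [ofHom_algebraMap_stalk, ← Spec.map_comp_assoc, hψ]
      exact SpecMap_stalkSpecializes_fromSpecStalk _,
      f.SpecMap_fromSpecStalk_comp_eq_of_comp_stalkToFunctionField hxy hψ⟩
  have h : X.fromSpecStalk x (IsLocalRing.closedPoint _) =
      (Spec.map ψ ≫ X.fromSpecStalk y) (IsLocalRing.closedPoint _) :=
    congrArg (fun l : sq.commSq.LiftStruct => l.l (IsLocalRing.closedPoint _))
      ((IsSeparated.valuativeCriterion f sq).elim l₁ l₂)
  rwa [fromSpecStalk_closedPoint, fromSpecStalk_SpecMap_closedPoint] at h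

theorem eq_of_isSeparated_of_range_algebraMap_eq {X S : Scheme} [IsIntegral X] (f : X ⟶ S)
    [IsSeparated f] {x y : X} [ValuationRing (X.presheaf.stalk x)] (hxy : f x = f y)
    (hr : Set.range (algebraMap (X.presheaf.stalk x) X.functionField) =
      Set.range (algebraMap (X.presheaf.stalk y) X.functionField)) : x = y := by
  obtain ⟨e, he⟩ := RingHom.exists_ringEquiv_comp_eq_of_range_eq
    (IsFractionRing.injective _ X.functionField) (IsFractionRing.injective _ X.functionField)
    hr.symm
  exact eq_of_isSeparated_of_comp_stalkToFunctionField f hxy e.toCommRingCatIso.hom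
    (CommRingCat.hom_ext he)

theorem diagonal_apply_eq_of_stalkMap_comp_eq_stalkSpecializes {X S : Scheme} (f : X ⟶ S)
    {w : ↑(pullback f f)} {x : X}
    (φ : (pullback f f).presheaf.stalk w ⟶ X.presheaf.stalk x) [IsLocalHom φ.hom]
    (h₁ : x ⤳ pullback.fst f f w) (h₂ : x ⤳ pullback.snd f f w)
    (hφ₁ : (pullback.fst f f).stalkMap w ≫ φ = X.presheaf.stalkSpecializes h₁)
    (hφ₂ : (pullback.snd f f).stalkMap w ≫ φ = X.presheaf.stalkSpecializes h₂) :
    pullback.diagonal f x = w := by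
  have hu : Spec.map φ ≫ (pullback f f).fromSpecStalk w =
      X.fromSpecStalk x ≫ pullback.diagonal f :=
    pullback.hom_ext (by simpa using Hom.SpecMap_fromSpecStalk_comp_eq_fromSpecStalk _ h₁ hφ₁)
      (by simpa using Hom.SpecMap_fromSpecStalk_comp_eq_fromSpecStalk _ h₂ hφ₂)
  have := congrArg (fun g : Spec (X.presheaf.stalk x) ⟶ pullback f f =>
    g (IsLocalRing.closedPoint _)) hu
  rw [fromSpecStalk_SpecMap_closedPoint] at this
  exact (this.trans (congrArg (pullback.diagonal f) fromSpecStalk_closedPoint)).symm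

theorem mem_range_diagonal_of_specializes {X S : Scheme} [IsIntegral X]
    [∀ x : X, ValuationRing (X.presheaf.stalk x)] (f : X ⟶ S)
    (H : ∀ x y : X, f x = f y →
      Set.range (algebraMap (X.presheaf.stalk x) X.functionField) =
        Set.range (algebraMap (X.presheaf.stalk y) X.functionField) → x = y)
    {w : ↑(pullback f f)} (h : pullback.diagonal f (genericPoint X) ⤳ w) :
    w ∈ Set.range (pullback.diagonal f) := by
  obtain ⟨φ₁, hφ₁s, hφ₁⟩ :=
    exists_surjective_stalk_retraction_of_comp_eq_id (pullback.diagonal_fst f) h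
  obtain ⟨φ₂, hφ₂s, hφ₂⟩ :=
    exists_surjective_stalk_retraction_of_comp_eq_id (pullback.diagonal_snd f) h
  have hf : f (pullback.fst f f w) = f (pullback.snd f f w) := by
    rw [← Hom.comp_apply, ← Hom.comp_apply, pullback.condition]
  have hxy := H _ _ hf (by
    rw [← hφ₁s.range_comp, ← hφ₂s.range_comp]
    exact congrArg (fun φ => Set.range φ.hom) (hφ₁.trans hφ₂.symm))
  have : IsLocalHom φ₁.hom := .of_surjective _ hφ₁s
  refine ⟨_, diagonal_apply_eq_of_stalkMap_comp_eq_stalkSpecializes f φ₁ (specializes_refl _)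
    (specializes_of_eq hxy) ?_ ?_⟩
  all_goals
    refine eq_stalkSpecializes_of_comp_stalkToFunctionField _ ?_
    rw [Category.assoc, hφ₁]
  · exact Hom.stalkMap_stalkSpecializes_stalkMap_of_comp_eq_id (pullback.diagonal_fst f) h _
  · exact Hom.stalkMap_stalkSpecializes_stalkMap_of_comp_eq_id (pullback.diagonal_snd f) h _

end AlgebraicGeometry

/-- Let `X` be an integral scheme all of whose stalks are valuation rings
(a Prüfer scheme) and let `f : X ⟶ S` be a morphism of schemes.  Then `f` is separated if and
only if any two points of `X` with the same image under `f` whose local rings coincide as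
subrings of the function field `k(X)` are equal. -/
theorem prufer_separated_iff_localRings_distinguish_points
    {X S : AlgebraicGeometry.Scheme} [IsIntegral X]
    (hval : ∀ x : X, IsValuationRing (X.presheaf.stalk x))
    (f : X ⟶ S) :
    IsSeparated f ↔
      ∀ x y : X, f.base x = f.base y →
        Set.range (algebraMap (X.presheaf.stalk x) X.functionField) =
          Set.range (algebraMap (X.presheaf.stalk y) X.functionField) →
        x = y := by
  have (x : X) : ValuationRing (X.presheaf.stalk x) := (hval x).valuationRing
  constructor
  · intro _ x y hxy hr
    exact eq_of_isSeparated_of_range_algebraMap_eq f hxy hr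
  · intro H
    exact ⟨IsClosedImmersion.of_isPreimmersion _ <| (genericPoint_spec X).isClosed_range
      (pullback.diagonal f).continuous fun _ h => mem_range_diagonal_of_specializes f H h⟩
end

section
/- Let A be a local commutative ring and let U be a quasi-compact subset of Spec(A) which is stable under generalization (if q' ⊆ q and q ∈ U then q' ∈ U) and such that the canonical ring homomorphism A → ∏_{q ∈ U} A_q into the product of the localizations at the primes of U is injective. Assume that every finitely generated ideal I of A satisfying I ⊄ q for all q ∈ U is generated by a single non-zerodivisor. Then there exists a prime p ∈ U such that U = {q ∈ Spec(A) : q ⊆ p}. -/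
/-- Let `A` be a local ring and `U ⊆ Spec A` a quasi-compact subset which is
stable under generalization and schematically dense (the canonical map `A → ∏_{q ∈ U} A_q` is
injective).  If every finitely generated ideal `I` of `A` not contained in any prime of `U`
is generated by a single non-zerodivisor, then `U` is local: `U` is the set of
generalizations of a single prime `p ∈ U`. -/
theorem local_prufer_pair_U_is_local
    {A : Type*} [CommRing A] [IsLocalRing A] (U : Set (PrimeSpectrum A))
    (hqc : IsCompact U)
    (hgen : ∀ q ∈ U, ∀ q' : PrimeSpectrum A, q'.asIdeal ≤ q.asIdeal → q' ∈ U)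
    (hinj : Function.Injective fun a : A => fun q : U =>
      algebraMap A (Localization.AtPrime (q : PrimeSpectrum A).asIdeal) a)
    (hprin : ∀ I : Ideal A, I.FG → (∀ q ∈ U, ¬ I ≤ PrimeSpectrum.asIdeal q) →
      ∃ a ∈ nonZeroDivisors A, I = Ideal.span {a}) :
    ∃ p ∈ U, U = {q : PrimeSpectrum A | q.asIdeal ≤ p.asIdeal} := by
  classical
  -- U is nonempty
  have hne : U.Nonempty := by
    by_contra h
    rw [Set.not_nonempty_iff_eq_empty] at h
    subst h
    exact zero_ne_one (hinj (funext fun q => absurd q.2 (Set.notMem_empty _)))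
  -- directedness: two elements each lying in a prime of U lie in a common prime of U
  have hdir : ∀ a b : A, (∃ q ∈ U, a ∈ q.asIdeal) → (∃ q ∈ U, b ∈ q.asIdeal) →
      ∃ q ∈ U, a ∈ q.asIdeal ∧ b ∈ q.asIdeal := by
    rintro a b ⟨q₁, hq₁, ha⟩ ⟨q₂, hq₂, hb⟩
    by_contra hcon
    push_neg at hcon
    have hUt : ∀ q ∈ U, ¬ Ideal.span ({a, b} : Set A) ≤ q.asIdeal := by
      intro q hq hle
      exact hcon q hq (hle (Ideal.subset_span (by simp))) (hle (Ideal.subset_span (by simp)))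
    obtain ⟨c, hc, hspan⟩ := hprin _ (Submodule.fg_span (Set.toFinite _)) hUt
    have hca : a ∈ Ideal.span ({c} : Set A) := hspan ▸ Ideal.subset_span (by simp)
    have hcb : b ∈ Ideal.span ({c} : Set A) := hspan ▸ Ideal.subset_span (by simp)
    obtain ⟨u, hu⟩ := Ideal.mem_span_singleton'.mp hca
    obtain ⟨v, hv⟩ := Ideal.mem_span_singleton'.mp hcb
    have hcmem : c ∈ Ideal.span ({a, b} : Set A) := hspan.ge (Ideal.mem_span_singleton_self c)
    obtain ⟨r, s, hrs⟩ := Ideal.mem_span_pair.mp hcmem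
    have h1 : (r * u + s * v) * c = 1 * c := by
      rw [one_mul]; linear_combination r * hu + s * hv + hrs
    have h1' : r * u + s * v = 1 := by
      exact mul_cancel_right_mem_nonZeroDivisors hc |>.mp (by rw [h1, one_mul])
    rcases IsLocalRing.isUnit_or_isUnit_of_add_one h1' with h | h
    · obtain ⟨w, hw⟩ := isUnit_of_mul_isUnit_right h
      have hcval : c = ↑w⁻¹ * a := by
        rw [← hu, ← hw, ← mul_assoc]
        simp
      refine hcon q₁ hq₁ ha ?_
      rw [← hv, hcval]
      exact Ideal.mul_mem_left _ _ (Ideal.mul_mem_left _ _ ha)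
    · obtain ⟨w, hw⟩ := isUnit_of_mul_isUnit_right h
      have hcval : c = ↑w⁻¹ * b := by
        rw [← hv, ← hw, ← mul_assoc]
        simp
      refine hcon q₂ hq₂ ?_ hb
      rw [← hu, hcval]
      exact Ideal.mul_mem_left _ _ (Ideal.mul_mem_left _ _ hb)
  -- the union of the primes in U is a prime ideal
  set S : Set A := {a | ∃ q ∈ U, a ∈ q.asIdeal} with hSdef
  obtain ⟨q₀, hq₀⟩ := hne
  let P : Ideal A :=
    { carrier := S
      add_mem' := fun {a b} ha hb => by
        obtain ⟨q, hq, ha', hb'⟩ := hdir a b ha hb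
        exact ⟨q, hq, add_mem ha' hb'⟩
      zero_mem' := ⟨q₀, hq₀, zero_mem _⟩
      smul_mem' := fun r a ha => by
        obtain ⟨q, hq, ha'⟩ := ha
        exact ⟨q, hq, Ideal.mul_mem_left _ r ha'⟩ }
  have hPprime : P.IsPrime := by
    refine ⟨fun htop => ?_, fun {a b} hab => ?_⟩
    · have h1 : (1 : A) ∈ S := by rw [Ideal.eq_top_iff_one] at htop; exact htop
      obtain ⟨q, hq, h1q⟩ := h1
      exact q.isPrime.ne_top ((Ideal.eq_top_iff_one _).mpr h1q)
    · obtain ⟨q, hq, hab'⟩ := hab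
      rcases q.isPrime.mem_or_mem hab' with h | h
      · exact Or.inl ⟨q, hq, h⟩
      · exact Or.inr ⟨q, hq, h⟩
  let p : PrimeSpectrum A := ⟨P, hPprime⟩
  have hleP : ∀ q ∈ U, q.asIdeal ≤ P := fun q hq a ha => ⟨q, hq, ha⟩
  -- p ∈ U by quasi-compactness
  have hpU : p ∈ U := by
    by_contra hp
    have hcov : U ⊆ ⋃ i : S, (PrimeSpectrum.basicOpen (i : A) : Set (PrimeSpectrum A)) := by
      intro q hq
      have hlt : q.asIdeal < P := by
        refine lt_of_le_of_ne (hleP q hq) (fun h => hp ?_)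
        have : q = p := PrimeSpectrum.ext h
        rwa [← this]
      obtain ⟨f, hfP, hfq⟩ := SetLike.exists_of_lt hlt
      exact Set.mem_iUnion.mpr ⟨⟨f, hfP⟩, (PrimeSpectrum.mem_basicOpen _ _).mpr hfq⟩
    obtain ⟨t, ht⟩ := hqc.elim_finite_subcover
      (fun i : S => (PrimeSpectrum.basicOpen (i : A) : Set (PrimeSpectrum A)))
      (fun i => (PrimeSpectrum.basicOpen (i : A)).isOpen) hcov
    let I : Ideal A := Ideal.span (Subtype.val '' (↑t : Set S))
    have hIfg : I.FG := Submodule.fg_span (t.finite_toSet.image _)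
    have hIt : ∀ q ∈ U, ¬ I ≤ q.asIdeal := by
      intro q hq hle'
      obtain ⟨i, hit, hiq⟩ := Set.mem_iUnion₂.mp (ht hq)
      have hiI : (i : A) ∈ I := Ideal.subset_span ⟨i, hit, rfl⟩
      exact (PrimeSpectrum.mem_basicOpen _ _).mp hiq (hle' hiI)
    obtain ⟨c, hc, hspan⟩ := hprin I hIfg hIt
    have hcS : c ∈ S := by
      have hcI : c ∈ I := hspan ▸ Ideal.mem_span_singleton_self c
      have hIP : I ≤ P := Ideal.span_le.mpr (by
        rintro x ⟨i, -, rfl⟩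
        exact i.2)
      exact hIP hcI
    obtain ⟨q, hq, hcq⟩ := hcS
    exact hIt q hq (hspan ▸ (Ideal.span_singleton_le_iff_mem _).mpr hcq)
  exact ⟨p, hpU, Set.Subset.antisymm (fun q hq => hleP q hq) (fun q hq => hgen p hpU q hq)⟩
end

section
/- Let A be a local commutative ring and let p be a prime ideal of A such that the localization map A → A_p is injective. Assume that every finitely generated ideal I of A with I ⊄ p is generated by a single non-zerodivisor. Then: (a) the maximal ideal p·A_p of the local ring A_p is contained in the image of A in A_p; and (b) the image of A under the composite A → A_p → κ(p), where κ(p) is the residue field of A_p, is a valuation subring of κ(p), i.e. for every nonzero element z of κ(p), either z or z^{-1} lies in this image. -/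
/-! Given `a / s ∈ A_p`, the ideal `(a, s)` is not contained in `p`, hence equals `(c)` for a
non-zerodivisor `c`. Cancelling `c` from `a = c u`, `s = c v`, `c = α a + β s` gives
`α u + β v = 1`, so in the local ring `A` one of `u`, `v` is a unit: `s ∣ a` or `a ∣ s`.
Accordingly `a / s` or its inverse comes from `A`; an element of the maximal ideal of `A_p`
is not a unit, so it must come from `A`. -/

open IsLocalRing

theorem IsLocalRing.dvd_or_dvd_of_span_pair_eq_span_singleton {A : Type*} [CommRing A]
    [IsLocalRing A] {a b c : A} (hc : c ∈ nonZeroDivisors A)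
    (hspan : Ideal.span {a, b} = Ideal.span {c}) : a ∣ b ∨ b ∣ a := by
  have hca : c ∣ a := Ideal.mem_span_singleton.mp (hspan ▸ Ideal.subset_span (by simp))
  have hcb : c ∣ b := Ideal.mem_span_singleton.mp (hspan ▸ Ideal.subset_span (by simp))
  obtain ⟨u, rfl⟩ := hca
  obtain ⟨v, rfl⟩ := hcb
  obtain ⟨α, β, hαβ⟩ := Ideal.mem_span_pair.mp (hspan ▸ Ideal.mem_span_singleton_self c)
  have hsum : α * u + β * v = 1 :=
    (mul_cancel_left_mem_nonZeroDivisors hc).mp (by linear_combination hαβ)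
  rcases isUnit_or_isUnit_of_add_one hsum with hu | hv
  · exact .inl (mul_dvd_mul_left c (isUnit_of_mul_isUnit_right hu).dvd)
  · exact .inr (mul_dvd_mul_left c (isUnit_of_mul_isUnit_right hv).dvd)

theorem IsLocalization.mem_range_or_exists_mul_eq_one {A : Type*} [CommRing A]
    {M : Submonoid A} {S : Type*} [CommRing S] [Algebra A S] [IsLocalization M S]
    (hdvd : ∀ a, ∀ s ∈ M, a ∣ s ∨ s ∣ a) (x : S) :
    x ∈ Set.range (algebraMap A S) ∨ ∃ y, x * algebraMap A S y = 1 := by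
  obtain ⟨⟨a, s⟩, rfl⟩ := IsLocalization.mk'_surjective M x
  rcases hdvd a s s.2 with ⟨t, hst⟩ | ⟨t, hat⟩
  · refine .inr ⟨t, ?_⟩
    rw [← IsLocalization.mk'_one (M := M) S t, ← IsLocalization.mk'_mul, mul_one, ← hst,
      IsLocalization.mk'_self]
  · exact .inl ⟨t, by rw [IsLocalization.eq_mk'_iff_mul_eq, ← map_mul, hat, mul_comm]⟩

theorem local_prufer_pair_is_semivaluation_general
    {A : Type*} [CommRing A] [IsLocalRing A] (p : Ideal A) [p.IsPrime]
    (hprin : ∀ I : Ideal A, I.FG → ¬ I ≤ p →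
      ∃ a ∈ nonZeroDivisors A, I = Ideal.span {a}) :
    (∀ x ∈ IsLocalRing.maximalIdeal (Localization.AtPrime p),
        x ∈ Set.range (algebraMap A (Localization.AtPrime p))) ∧
    (∀ z : IsLocalRing.ResidueField (Localization.AtPrime p), z ≠ 0 →
        (z ∈ Set.range ((IsLocalRing.residue (Localization.AtPrime p)).comp
          (algebraMap A (Localization.AtPrime p))) ∨
        z⁻¹ ∈ Set.range ((IsLocalRing.residue (Localization.AtPrime p)).comp
          (algebraMap A (Localization.AtPrime p))))) := by
  have hdvd : ∀ a, ∀ s ∈ p.primeCompl, a ∣ s ∨ s ∣ a := fun a s hs => by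
    obtain ⟨c, hc, hspan⟩ := hprin (Ideal.span {a, s}) (Submodule.fg_span (Set.toFinite _))
      fun hle => hs (hle (Ideal.subset_span (by simp)))
    exact dvd_or_dvd_of_span_pair_eq_span_singleton hc hspan
  have key := IsLocalization.mem_range_or_exists_mul_eq_one (S := Localization.AtPrime p) hdvd
  refine ⟨fun x hx => (key x).resolve_right ?_, fun z _ => ?_⟩
  · rintro ⟨y, hy⟩
    exact (mem_maximalIdeal x).mp hx (IsUnit.of_mul_eq_one _ hy)
  · obtain ⟨x, rfl⟩ := residue_surjective z
    rcases key x with ⟨a, rfl⟩ | ⟨y, hy⟩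
    · exact .inl ⟨a, rfl⟩
    · exact .inr ⟨y, (inv_eq_of_mul_eq_one_right (by rw [RingHom.comp_apply, ← map_mul, hy, map_one])).symm⟩

/-- Let `A` be a local ring and `p` a prime such that `A → A_p` is injective
and every finitely generated ideal `I ⊄ p` is generated by a single non-zerodivisor.  Then
(a) the maximal ideal of `A_p` is contained in the image of `A`, and (b) the image of `A` in
the residue field `κ(p)` is a valuation subring: each nonzero `z ∈ κ(p)` satisfies `z` or
`z⁻¹` lies in the image. -/
theorem local_prufer_pair_is_semivaluation
    {A : Type*} [CommRing A] [IsLocalRing A] (p : Ideal A) [p.IsPrime]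
    (hinj : Function.Injective (algebraMap A (Localization.AtPrime p)))
    (hprin : ∀ I : Ideal A, I.FG → ¬ I ≤ p →
      ∃ a ∈ nonZeroDivisors A, I = Ideal.span {a}) :
    (∀ x ∈ IsLocalRing.maximalIdeal (Localization.AtPrime p),
        x ∈ Set.range (algebraMap A (Localization.AtPrime p))) ∧
    (∀ z : IsLocalRing.ResidueField (Localization.AtPrime p), z ≠ 0 →
        (z ∈ Set.range ((IsLocalRing.residue (Localization.AtPrime p)).comp
          (algebraMap A (Localization.AtPrime p))) ∨
        z⁻¹ ∈ Set.range ((IsLocalRing.residue (Localization.AtPrime p)).comp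
          (algebraMap A (Localization.AtPrime p))))) :=
  local_prufer_pair_is_semivaluation_general p hprin
end

section
/- Let B be a local integral domain with maximal ideal m and residue field k = B/m, let R be a valuation subring of k (a subring such that every nonzero z ∈ k satisfies z ∈ R or z^{-1} ∈ R), and let A be the preimage of R under the quotient map B → k. Then A is a valuation ring if and only if B is a valuation ring. -/
/-- Let `B` be a local domain with residue field `k`, let `R` be a
valuation subring of `k`, and let `A ⊆ B` be the preimage of `R` under the quotient map
`B → k` (so `(B, A)` is a semivaluation ring).  Then `A` is a valuation ring if and only if
`B` is a valuation ring. -/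
theorem semivaluation_valuationRing_iff
    {B : Type*} [CommRing B] [IsLocalRing B] [IsDomain B]
    (R : Subring (IsLocalRing.ResidueField B))
    (hR : ∀ z : IsLocalRing.ResidueField B, z ≠ 0 → z ∈ R ∨ z⁻¹ ∈ R) :
    let A : Subring B := R.comap (IsLocalRing.residue B)
    (∀ a b : A, ∃ c : A, a * c = b ∨ b * c = a) ↔
      (∀ a b : B, ∃ c : B, a * c = b ∨ b * c = a) := by
  intro A
  have memA : ∀ x : B, x ∈ A ↔ IsLocalRing.residue B x ∈ R := fun x => Iff.rfl
  -- non-units lie in A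
  have nonunit_mem : ∀ x : B, ¬ IsUnit x → x ∈ A := by
    intro x hx
    have : x ∈ IsLocalRing.maximalIdeal B := hx
    have h0 : IsLocalRing.residue B x = 0 := Ideal.Quotient.eq_zero_iff_mem.mpr this
    rw [memA, h0]
    exact R.zero_mem
  constructor
  · intro hA a b
    by_cases ha : IsUnit a
    · obtain ⟨u, rfl⟩ := ha
      exact ⟨(↑u⁻¹ : B) * b, Or.inl (by rw [← mul_assoc, u.mul_inv, one_mul])⟩
    by_cases hb : IsUnit b
    · obtain ⟨u, rfl⟩ := hb
      exact ⟨(↑u⁻¹ : B) * a, Or.inr (by rw [← mul_assoc, u.mul_inv, one_mul])⟩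
    obtain ⟨c, hc⟩ := hA ⟨a, nonunit_mem a ha⟩ ⟨b, nonunit_mem b hb⟩
    refine ⟨(c : B), ?_⟩
    rcases hc with h | h
    · exact Or.inl (congrArg Subtype.val h)
    · exact Or.inr (congrArg Subtype.val h)
  · intro hB a b
    obtain ⟨c, hc⟩ := hB (a : B) (b : B)
    by_cases hcA : c ∈ A
    · refine ⟨⟨c, hcA⟩, ?_⟩
      rcases hc with h | h
      · exact Or.inl (Subtype.ext h)
      · exact Or.inr (Subtype.ext h)
    · -- c ∉ A, so residue c ≠ 0, hence c is a unit, and c⁻¹ ∈ A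
      have hres : IsLocalRing.residue B c ∉ R := hcA
      have hne : IsLocalRing.residue B c ≠ 0 := by
        intro h; exact hres (h ▸ R.zero_mem)
      have hcu : IsUnit c := by
        by_contra h
        exact hne (Ideal.Quotient.eq_zero_iff_mem.mpr h)
      obtain ⟨u, rfl⟩ := hcu
      have hinv : IsLocalRing.residue B (↑u⁻¹ : B) = (IsLocalRing.residue B (u : B))⁻¹ := by
        refine eq_inv_of_mul_eq_one_left ?_
        rw [← map_mul, u.inv_mul, map_one]
      have hmem : (↑u⁻¹ : B) ∈ A := by
        rw [memA, hinv]
        rcases hR _ hne with h | h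
        · exact absurd h hres
        · exact h
      refine ⟨⟨(↑u⁻¹ : B), hmem⟩, ?_⟩
      rcases hc with h | h
      · refine Or.inr (Subtype.ext ?_)
        show (b : B) * ↑u⁻¹ = a
        rw [← h, mul_assoc, u.mul_inv, mul_one]
      · refine Or.inl (Subtype.ext ?_)
        show (a : B) * ↑u⁻¹ = b
        rw [← h, mul_assoc, u.mul_inv, mul_one]
end
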